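/- arXiv:1602.03553 — 2 statements merged into one kernel-verified Lean document; each statement's English description precedes it below -/
import Mathlib

section
/- For every complex number z with 0 < Re z < 1 and all real a, a' with 0 < a < 1 and 0 < a' < 1, the line integral ∫_{t ∈ ℝ} f_r(a + t·exp(-3iπ/4))·exp(-3iπ/4) dt equals ∫_{t ∈ ℝ} f_r(a' + t·exp(-3iπ/4))·exp(-3iπ/4) dt; that is, the integral of f_r along the line of slope +1 through (a,0) is independent of the choice of a in (0,1). -/
open MeasureTheory

/-- The right integrand `f_r(w) = w^(z-1)·exp(πi w²)/(exp(πi w) - exp(-πi w))`. -/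
noncomputable def fr (z w : ℂ) : ℂ :=
  w ^ (z - 1) * Complex.exp (Real.pi * Complex.I * w ^ 2) /
    (Complex.exp (Real.pi * Complex.I * w) - Complex.exp (-(Real.pi * Complex.I) * w))

/-!
Write `ω = exp(-3πi/4)` and `w = ω u`. The line `a + tω` becomes the horizontal line
`Im u = a/√2`, and for `0 < Im u < 1/√2` the point `w` avoids both the branch cut of `w^(z-1)`
and the integers, so the rotated integrand is holomorphic on that strip. Since `ω² = i`, the
factor `exp(πi w²)` equals `exp(-π u²)`, which makes the rotated integrand `O(exp(-π (Re u)²))`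
uniformly on closed substrips (for `Re z ≤ 1`). Cauchy's theorem on rectangles, whose vertical
sides then contribute nothing in the limit, shows that the integrals over any two horizontal lines
of the strip agree.
-/

open Complex Filter Topology Set
open scoped Real Interval

section StripShift

variable {E : Type*} [NormedAddCommGroup E] {g : ℂ → E} {φ : ℝ → ℝ}

theorem integrable_comp_add_mul_I {s : Set ℝ} {b : ℝ} (hb : b ∈ s)
    (hg : ContinuousOn g (univ ×ℂ s)) (hφ : Integrable φ)
    (hgφ : ∀ u ∈ univ ×ℂ s, ‖g u‖ ≤ φ u.re) :
    Integrable fun t : ℝ => g (t + b * I) := by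
  have hmem : ∀ t : ℝ, (t + b * I : ℂ) ∈ univ ×ℂ s := fun t => by simp [mem_reProdIm, hb]
  refine hφ.mono' (hg.comp_continuous (by fun_prop) hmem).aestronglyMeasurable
    (Eventually.of_forall fun t => ?_)
  simpa using hgφ _ (hmem t)

theorem tendsto_integral_vertical_cocompact [NormedSpace ℝ E] {b₁ b₂ : ℝ}
    (hφ₀ : Tendsto φ (cocompact ℝ) (𝓝 0)) (hgφ : ∀ u ∈ univ ×ℂ [[b₁, b₂]], ‖g u‖ ≤ φ u.re) :
    Tendsto (fun x : ℝ => ∫ y in b₁..b₂, g (x + y * I)) (cocompact ℝ) (𝓝 0) := by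
  refine squeeze_zero_norm (fun x => ?_) (by simpa using hφ₀.mul_const |b₂ - b₁|)
  refine intervalIntegral.norm_integral_le_of_norm_le_const fun y hy => ?_
  simpa using hgφ (x + y * I) (by simpa [mem_reProdIm] using uIoc_subset_uIcc hy)

theorem integral_add_mul_I_eq_of_differentiableOn_strip [NormedSpace ℂ E] [CompleteSpace E]
    {b₁ b₂ : ℝ} (hg : DifferentiableOn ℂ g (univ ×ℂ [[b₁, b₂]])) (hφ : Integrable φ)
    (hφ₀ : Tendsto φ (cocompact ℝ) (𝓝 0)) (hgφ : ∀ u ∈ univ ×ℂ [[b₁, b₂]], ‖g u‖ ≤ φ u.re) :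
    ∫ t : ℝ, g (t + b₁ * I) = ∫ t : ℝ, g (t + b₂ * I) := by
  set V := fun x : ℝ => ∫ y in b₁..b₂, g (x + y * I)
  have hrect : ∀ T : ℝ, (∫ x in -T..T, g (x + b₁ * I)) - (∫ x in -T..T, g (x + b₂ * I)) +
      I • V T - I • V (-T) = 0 := fun T =>
    integral_boundary_rect_eq_zero_of_differentiableOn g ⟨-T, b₁⟩ ⟨T, b₂⟩
      (hg.mono (reProdIm_subset_iff.mpr (prod_mono (subset_univ _) subset_rfl)))
  have hV := tendsto_integral_vertical_cocompact hφ₀ hgφ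
  have hlim := (((intervalIntegral_tendsto_integral
      (integrable_comp_add_mul_I left_mem_uIcc hg.continuousOn hφ hgφ) tendsto_neg_atTop_atBot
      tendsto_id).sub (intervalIntegral_tendsto_integral
      (integrable_comp_add_mul_I right_mem_uIcc hg.continuousOn hφ hgφ) tendsto_neg_atTop_atBot
      tendsto_id)).add ((hV.comp (tendsto_id.mono_right atTop_le_cocompact)).const_smul I)).sub
    ((hV.comp (tendsto_neg_atTop_atBot.mono_right atBot_le_cocompact)).const_smul I)
  simp only [smul_zero, add_zero, sub_zero] at hlim
  exact sub_eq_zero.mp (tendsto_nhds_unique (hlim.congr hrect) tendsto_const_nhds)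

theorem exists_norm_le_mul_exp_neg_sq {s : Set ℝ} (hs : IsCompact s)
    (hg : ContinuousOn g (univ ×ℂ s)) {R C : ℝ}
    (htail : ∀ u ∈ univ ×ℂ s, R ≤ |u.re| → ‖g u‖ ≤ C * Real.exp (-π * u.re ^ 2)) :
    ∃ M, ∀ u ∈ univ ×ℂ s, ‖g u‖ ≤ M * Real.exp (-π * u.re ^ 2) := by
  obtain ⟨B, hB⟩ := (isCompact_Icc.reProdIm hs).exists_bound_of_continuousOn
    (hg.mono (reProdIm_subset_iff.mpr (prod_mono (subset_univ (Icc (-R) R)) subset_rfl)))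
  refine ⟨max C (B * Real.exp (π * R ^ 2)), fun u hu => ?_⟩
  rcases le_or_gt R |u.re| with hR | hR
  · exact (htail u hu hR).trans (by gcongr; exact le_max_left _ _)
  · have hBu : ‖g u‖ ≤ B := hB u ⟨Ioo_subset_Icc_self (abs_lt.mp hR), hu.2⟩
    calc ‖g u‖ ≤ B := hBu
      _ ≤ B * Real.exp (π * R ^ 2) * Real.exp (-π * u.re ^ 2) := by
          rw [mul_assoc, ← Real.exp_add]
          refine le_mul_of_one_le_right ((norm_nonneg _).trans hBu) (Real.one_le_exp ?_)
          have : u.re ^ 2 ≤ R ^ 2 := sq_le_sq.mpr (hR.le.trans (le_abs_self R))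
          nlinarith [Real.pi_pos]
      _ ≤ _ := by gcongr; exact le_max_right _ _

end StripShift

theorem exp_pi_I_mul_sub_exp_ne_zero {w : ℂ} (hw : ∀ n : ℤ, w ≠ n) :
    exp (π * I * w) - exp (-(π * I) * w) ≠ 0 := by
  rw [sub_ne_zero, Ne, exp_eq_exp_iff_exists_int]
  rintro ⟨n, hn⟩
  have h2πI : (2 * π * I : ℂ) ≠ 0 := by simp [Real.pi_ne_zero]
  exact hw n (mul_left_cancel₀ h2πI (by linear_combination hn))

theorem two_pi_mul_abs_im_le_norm_exp_sub_exp (w : ℂ) :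
    2 * π * |w.im| ≤ ‖exp (π * I * w) - exp (-(π * I) * w)‖ := by
  have h₁ : ‖exp (π * I * w)‖ = Real.exp (-(π * w.im)) := by
    simp [norm_exp, mul_re, mul_im]
  have h₂ : ‖exp (-(π * I) * w)‖ = Real.exp (π * w.im) := by
    simp [norm_exp, mul_re, mul_im]
  calc 2 * π * |w.im| = 2 * |π * w.im| := by rw [abs_mul, abs_of_pos Real.pi_pos]; ring
    _ ≤ 2 * Real.sinh |π * w.im| := by gcongr; exact Real.self_le_sinh_iff.mpr (abs_nonneg _)
    _ = |‖exp (π * I * w)‖ - ‖exp (-(π * I) * w)‖| := by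
      rw [← Real.abs_sinh, h₁, h₂, Real.sinh_eq, ← abs_neg, ← abs_two, ← abs_mul]
      congr 1; ring
    _ ≤ _ := abs_norm_sub_norm_le _ _

theorem differentiableAt_fr (z : ℂ) {w : ℂ} (hw : w ∈ slitPlane) (hwn : ∀ n : ℤ, w ≠ n) :
    DifferentiableAt ℂ (fr z) w :=
  ((differentiableAt_id.cpow_const hw).mul (by fun_prop)).div (by fun_prop)
    (exp_pi_I_mul_sub_exp_ne_zero hwn)

theorem norm_cpow_sub_one_le {z w : ℂ} {b : ℝ} (hz : z.re ≤ 1) (hb : 0 < b) (hbw : b ≤ ‖w‖) :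
    ‖w ^ (z - 1)‖ ≤ b ^ (z.re - 1) * Real.exp (π * |z.im|) := by
  refine (norm_cpow_le w (z - 1)).trans ?_
  rw [sub_re, one_re, sub_im, one_im, sub_zero, div_eq_mul_inv, ← Real.exp_neg]
  refine mul_le_mul (Real.rpow_le_rpow_of_nonpos hb hbw (by linarith)) (Real.exp_le_exp.mpr ?_)
    (Real.exp_nonneg _) (by positivity)
  calc -(w.arg * z.im) ≤ |w.arg| * |z.im| := by rw [← abs_mul]; exact neg_le_abs _
    _ ≤ π * |z.im| := by gcongr; exact abs_arg_le_pi w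

noncomputable def lineDir : ℂ := exp (-(3 * π * I) / 4)

theorem lineDir_eq : lineDir = (√2 / 2 : ℝ) * (-1 - I) := by
  have h : -(3 * π * I) / 4 = ((-(π - π / 4) : ℝ) : ℂ) * I := by push_cast; ring
  rw [lineDir, h, exp_mul_I, ← ofReal_cos, ← ofReal_sin, Real.cos_neg, Real.sin_neg,
    Real.cos_pi_sub, Real.sin_pi_sub, Real.cos_pi_div_four, Real.sin_pi_div_four]
  push_cast; ring

theorem lineDir_sq : lineDir ^ 2 = I := by
  have h : ((√2 : ℝ) : ℂ) ^ 2 = 2 := by norm_cast; exact Real.sq_sqrt zero_le_two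
  rw [lineDir_eq]; push_cast at h ⊢
  linear_combination (I / 2) * h + ((√2 : ℂ) ^ 2 / 4) * I_sq

theorem lineDir_mul_I_sub_one : lineDir * (I - 1) = √2 := by
  rw [lineDir_eq]; push_cast
  linear_combination (-(√2 / 2 : ℂ)) * I_sq

theorem norm_lineDir : ‖lineDir‖ = 1 := by
  simp [lineDir, norm_exp]

theorem re_lineDir_mul (u : ℂ) : (lineDir * u).re = √2 / 2 * (u.im - u.re) := by
  rw [lineDir_eq]; simp [mul_re, mul_im]; ring

theorem im_lineDir_mul (u : ℂ) : (lineDir * u).im = -(√2 / 2 * (u.re + u.im)) := by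
  rw [lineDir_eq]; simp [mul_re, mul_im]; ring

theorem re_lineDir_mul_of_im_eq_zero {u : ℂ} (h : (lineDir * u).im = 0) :
    (lineDir * u).re = √2 * u.im := by
  have hs : 0 < √2 := by positivity
  rw [im_lineDir_mul, neg_eq_zero, mul_eq_zero] at h
  rw [re_lineDir_mul]
  rcases h with h | h
  · linarith
  · linear_combination (-(√2 / 2)) * h

theorem lineDir_mul_mem_slitPlane {u : ℂ} (hu : 0 < u.im) : lineDir * u ∈ slitPlane := by
  rw [mem_slitPlane_iff, or_iff_not_imp_right, not_not]
  intro h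
  rw [re_lineDir_mul_of_im_eq_zero h]
  positivity

theorem lineDir_mul_ne_intCast {u : ℂ} (hu₀ : 0 < u.im) (hu₁ : √2 * u.im < 1) (n : ℤ) :
    lineDir * u ≠ n := by
  intro h
  have hre := re_lineDir_mul_of_im_eq_zero (by rw [h]; simp)
  rw [h, intCast_re] at hre
  have h₀ : (0 : ℝ) < n := hre ▸ by positivity
  have h₁ : (n : ℝ) < 1 := hre ▸ hu₁
  norm_cast at h₀ h₁
  omega

theorem norm_exp_pi_I_mul_lineDir_mul_sq (u : ℂ) :
    ‖exp (π * I * (lineDir * u) ^ 2)‖ = Real.exp (-π * (u.re ^ 2 - u.im ^ 2)) := by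
  have h : π * I * (lineDir * u) ^ 2 = -π * u ^ 2 := by
    rw [mul_pow, lineDir_sq]; linear_combination (π * u ^ 2 : ℂ) * I_sq
  rw [h, norm_exp]
  simp [sq, mul_re, mul_im]

noncomputable def rotatedFr (z u : ℂ) : ℂ := fr z (lineDir * u) * lineDir

theorem differentiableOn_rotatedFr (z : ℂ) {b₁ b₂ : ℝ} (hb₁ : 0 < b₁) (hb₂ : √2 * b₂ < 1) :
    DifferentiableOn ℂ (rotatedFr z) (univ ×ℂ Icc b₁ b₂) := by
  rintro u ⟨-, hb₁u, hub₂⟩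
  have hu₀ : 0 < u.im := hb₁.trans_le hb₁u
  have hu₁ : √2 * u.im < 1 := lt_of_le_of_lt (by gcongr) hb₂
  exact (((differentiableAt_fr z (lineDir_mul_mem_slitPlane hu₀)
    (lineDir_mul_ne_intCast hu₀ hu₁)).comp u (differentiableAt_id.const_mul lineDir)).mul_const
    lineDir).differentiableWithinAt

theorem norm_rotatedFr_le_of_le_abs_re {z u : ℂ} {b₁ b₂ : ℝ} (hz : z.re ≤ 1) (hb₁ : 0 < b₁)
    (hu : u.im ∈ Icc b₁ b₂) (hre : b₂ + 1 ≤ |u.re|) :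
    ‖rotatedFr z u‖ ≤ b₁ ^ (z.re - 1) * Real.exp (π * |z.im|) * Real.exp (π * b₂ ^ 2) *
      Real.exp (-π * u.re ^ 2) := by
  have hu₀ : 0 < u.im := hb₁.trans_le hu.1
  have hden : 1 ≤ ‖exp (π * I * (lineDir * u)) - exp (-(π * I) * (lineDir * u))‖ := by
    refine le_trans ?_ (two_pi_mul_abs_im_le_norm_exp_sub_exp _)
    have h₁ : 1 ≤ |u.re + u.im| := by
      have := abs_add_le (u.re + u.im) (-u.im)
      rw [add_neg_cancel_right, abs_neg, abs_of_pos hu₀] at this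
      linarith [hu.2]
    rw [im_lineDir_mul, abs_neg, abs_mul, abs_of_pos (by positivity : (0 : ℝ) < √2 / 2)]
    have hπ : 1 ≤ π * √2 := by nlinarith [Real.pi_gt_three, Real.one_lt_sqrt_two]
    nlinarith [mul_le_mul_of_nonneg_left h₁ (by positivity : (0 : ℝ) ≤ π * √2)]
  have hcpow : ‖(lineDir * u) ^ (z - 1)‖ ≤ b₁ ^ (z.re - 1) * Real.exp (π * |z.im|) := by
    refine norm_cpow_sub_one_le hz hb₁ ?_
    rw [norm_mul, norm_lineDir, one_mul]
    exact hu.1.trans ((le_abs_self _).trans (abs_im_le_norm u))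
  have hgauss : ‖exp (π * I * (lineDir * u) ^ 2)‖ ≤
      Real.exp (π * b₂ ^ 2) * Real.exp (-π * u.re ^ 2) := by
    rw [norm_exp_pi_I_mul_lineDir_mul_sq, ← Real.exp_add]
    gcongr
    nlinarith [mul_le_mul_of_nonneg_left (pow_le_pow_left₀ hu₀.le hu.2 2) Real.pi_pos.le]
  calc ‖rotatedFr z u‖ = ‖(lineDir * u) ^ (z - 1)‖ * ‖exp (π * I * (lineDir * u) ^ 2)‖ /
        ‖exp (π * I * (lineDir * u)) - exp (-(π * I) * (lineDir * u))‖ := by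
        rw [rotatedFr, fr, norm_mul, norm_lineDir, mul_one, norm_div, norm_mul]
    _ ≤ ‖(lineDir * u) ^ (z - 1)‖ * ‖exp (π * I * (lineDir * u) ^ 2)‖ :=
        div_le_self (by positivity) hden
    _ ≤ b₁ ^ (z.re - 1) * Real.exp (π * |z.im|) *
        (Real.exp (π * b₂ ^ 2) * Real.exp (-π * u.re ^ 2)) := by gcongr
    _ = _ := by ring

theorem exists_norm_rotatedFr_le {z : ℂ} (hz : z.re ≤ 1) {b₁ b₂ : ℝ} (hb₁ : 0 < b₁)
    (hb₂ : √2 * b₂ < 1) :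
    ∃ M, ∀ u ∈ univ ×ℂ Icc b₁ b₂, ‖rotatedFr z u‖ ≤ M * Real.exp (-π * u.re ^ 2) :=
  exists_norm_le_mul_exp_neg_sq isCompact_Icc (differentiableOn_rotatedFr z hb₁ hb₂).continuousOn
    fun _ hu hre => norm_rotatedFr_le_of_le_abs_re hz hb₁ hu.2 hre

theorem integral_rotatedFr_add_mul_I_eq {z : ℂ} (hz : z.re ≤ 1) {c c' : ℝ} (hc₀ : 0 < c)
    (hc₁ : √2 * c < 1) (hc'₀ : 0 < c') (hc'₁ : √2 * c' < 1) :
    ∫ t : ℝ, rotatedFr z (t + c * I) = ∫ t : ℝ, rotatedFr z (t + c' * I) := by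
  have hmin : 0 < min c c' := lt_min hc₀ hc'₀
  have hmax : √2 * max c c' < 1 := by
    rw [mul_max_of_nonneg _ _ (Real.sqrt_nonneg 2)]; exact max_lt hc₁ hc'₁
  obtain ⟨M, hM⟩ := exists_norm_rotatedFr_le hz hmin hmax
  refine integral_add_mul_I_eq_of_differentiableOn_strip
    (differentiableOn_rotatedFr z hmin hmax) ((integrable_exp_neg_mul_sq Real.pi_pos).const_mul M)
    ?_ hM
  simpa using (tendsto_rpow_abs_mul_exp_neg_mul_sq_cocompact Real.pi_pos 0).const_mul M

theorem integral_fr_line_eq_integral_rotatedFr (z : ℂ) (a : ℝ) :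
    ∫ t : ℝ, fr z (a + t * lineDir) * lineDir =
      ∫ t : ℝ, rotatedFr z (t + (a / √2 : ℝ) * I) := by
  have ha : ((a / √2 : ℝ) : ℂ) * √2 = a := by
    norm_cast; field_simp
  have hpt : ∀ t : ℝ, (a + t * lineDir : ℂ) =
      lineDir * ((t - a / √2 : ℝ) + (a / √2 : ℝ) * I) := fun t => by
    push_cast at ha ⊢
    linear_combination (-(a / √2 : ℂ)) * lineDir_mul_I_sub_one - ha
  simp_rw [hpt]
  exact integral_sub_right_eq_self (fun t : ℝ => rotatedFr z (t + (a / √2 : ℝ) * I)) (a / √2)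

theorem fr_line_integral_independent_general (z : ℂ) (h1 : z.re < 1)
    (a a' : ℝ) (ha0 : 0 < a) (ha1 : a < 1) (ha'0 : 0 < a') (ha'1 : a' < 1) :
    (∫ t : ℝ, fr z (a + t * Complex.exp (-(3 * Real.pi * Complex.I) / 4)) *
        Complex.exp (-(3 * Real.pi * Complex.I) / 4)) =
    (∫ t : ℝ, fr z (a' + t * Complex.exp (-(3 * Real.pi * Complex.I) / 4)) *
        Complex.exp (-(3 * Real.pi * Complex.I) / 4)) := by
  change ∫ t : ℝ, fr z (a + t * lineDir) * lineDir = ∫ t : ℝ, fr z (a' + t * lineDir) * lineDir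
  have hs : 0 < √2 := by positivity
  rw [integral_fr_line_eq_integral_rotatedFr, integral_fr_line_eq_integral_rotatedFr]
  exact integral_rotatedFr_add_mul_I_eq h1.le (by positivity) (by rwa [mul_div_cancel₀ _ hs.ne'])
    (by positivity) (by rwa [mul_div_cancel₀ _ hs.ne'])

/-- The integral of `f_r` along the line of slope `+1` through `(a,0)`
(direction `exp(-3iπ/4)`) does not depend on the crossing point `a ∈ (0,1)`. -/
theorem fr_line_integral_independent (z : ℂ) (h0 : 0 < z.re) (h1 : z.re < 1)
    (a a' : ℝ) (ha0 : 0 < a) (ha1 : a < 1) (ha'0 : 0 < a') (ha'1 : a' < 1) :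
    (∫ t : ℝ, fr z (a + t * Complex.exp (-(3 * Real.pi * Complex.I) / 4)) *
        Complex.exp (-(3 * Real.pi * Complex.I) / 4)) =
    (∫ t : ℝ, fr z (a' + t * Complex.exp (-(3 * Real.pi * Complex.I) / 4)) *
        Complex.exp (-(3 * Real.pi * Complex.I) / 4)) :=
  fr_line_integral_independent_general z h1 a a' ha0 ha1 ha'0 ha'1
end

section
/- Let z ∈ ℂ with 0 < Re z < 1 and let θ ∈ {π/4, -3π/4}. Then there exist real R > 0 and C > 0 such that for every r ≥ R the function t ↦ f_r(t·exp(iθ)) is integrable on [r, ∞) and ‖∫_r^∞ f_r(t·exp(iθ)) dt‖ ≤ C·r^(Re z - 1). -/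
/-!
On the two rays `arg w = π/4` and `arg w = -3π/4` one has `w² = i‖w‖²`, so the factor
`exp(πi w²)` has modulus `exp(-π‖w‖²)`, while `|Im w| = ‖w‖/√2`. For `‖w‖ ≥ 1` this makes
`|Re(πi w)| ≥ 2`, so the denominator `exp(πi w) - exp(-πi w)` has modulus at least
`e² - 1 ≥ 1`; and the principal power satisfies `‖w^(z-1)‖ ≤ e^{π|Im z|} ‖w‖^(Re z - 1)`.
As `Re z - 1 < 0`, for `t ≥ r ≥ 1` the integrand is therefore dominated by
`e^{π|Im z|} r^(Re z - 1) e^{-πt²}`, and the Gaussian `e^{-πt²}` has total integral `1`.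
-/

open MeasureTheory

open Complex Real

lemma exp_abs_re_sub_one_le_norm_exp_sub_exp_neg (b : ℂ) :
    rexp |b.re| - 1 ≤ ‖cexp b - cexp (-b)‖ := by
  rcases le_total 0 b.re with hb | hb
  · calc rexp |b.re| - 1 ≤ ‖cexp b‖ - ‖cexp (-b)‖ := by
          rw [Complex.norm_exp, Complex.norm_exp, abs_of_nonneg hb, neg_re]
          gcongr
          exact Real.exp_le_one_iff.2 (by linarith)
      _ ≤ ‖cexp b - cexp (-b)‖ := norm_sub_norm_le _ _
  · calc rexp |b.re| - 1 ≤ ‖cexp (-b)‖ - ‖cexp b‖ := by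
          rw [Complex.norm_exp, Complex.norm_exp, abs_of_nonpos hb, neg_re]
          gcongr
          exact Real.exp_le_one_iff.2 hb
      _ ≤ ‖cexp b - cexp (-b)‖ := norm_sub_rev (cexp b) _ ▸ norm_sub_norm_le _ _

lemma norm_cpow_le_rpow_mul_exp (w s : ℂ) : ‖w ^ s‖ ≤ ‖w‖ ^ s.re * rexp (π * |s.im|) := by
  have harg : -(π * |s.im|) ≤ w.arg * s.im := by
    have := abs_mul w.arg s.im ▸
      mul_le_mul_of_nonneg_right (abs_arg_le_pi w) (abs_nonneg s.im)
    linarith [neg_abs_le (w.arg * s.im)]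
  calc ‖w ^ s‖ ≤ ‖w‖ ^ s.re / rexp (w.arg * s.im) := norm_cpow_le w s
    _ = ‖w‖ ^ s.re * rexp (-(w.arg * s.im)) := by rw [Real.exp_neg, div_eq_mul_inv]
    _ ≤ ‖w‖ ^ s.re * rexp (π * |s.im|) := by gcongr; linarith

section Diagonal

variable {w : ℂ}

lemma two_mul_im_sq_of_sq_eq (hw : w ^ 2 = ‖w‖ ^ 2 * I) : 2 * w.im ^ 2 = ‖w‖ ^ 2 := by
  have hre := congrArg re hw
  simp only [sq, mul_re, ofReal_re, ofReal_im, mul_zero, sub_zero, I_re, mul_im, zero_mul, add_zero,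
    I_im, mul_one, sub_self] at hre
  rw [Complex.sq_norm, normSq_apply]
  linarith

lemma norm_exp_pi_I_mul_sq_of_sq_eq (hw : w ^ 2 = ‖w‖ ^ 2 * I) :
    ‖cexp (π * I * w ^ 2)‖ = rexp (-π * ‖w‖ ^ 2) := by
  have : (π : ℂ) * I * w ^ 2 = ((-π * ‖w‖ ^ 2 : ℝ) : ℂ) := by
    rw [hw]
    push_cast
    linear_combination ((π : ℂ) * (‖w‖ : ℂ) ^ 2) * I_sq
  rw [this, Complex.norm_exp, ofReal_re]

lemma one_le_norm_exp_pi_I_mul_sub_exp_neg_of_sq_eq (hw : w ^ 2 = ‖w‖ ^ 2 * I) (h1 : 1 ≤ ‖w‖) :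
    1 ≤ ‖cexp (π * I * w) - cexp (-(π * I) * w)‖ := by
  have him := two_mul_im_sq_of_sq_eq hw
  have hre : |((π : ℂ) * I * w).re| = π * |w.im| := by
    simp [abs_mul, abs_of_pos pi_pos]
  calc 1 ≤ rexp 2 - 1 := by linarith [add_one_le_exp 2]
    _ ≤ rexp |((π : ℂ) * I * w).re| - 1 := by
        gcongr
        rw [hre]
        nlinarith [pi_gt_three, sq_abs w.im, abs_nonneg w.im]
    _ ≤ ‖cexp (π * I * w) - cexp (-(π * I) * w)‖ := by
        rw [neg_mul]
        exact exp_abs_re_sub_one_le_norm_exp_sub_exp_neg _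

lemma norm_fr_le_of_sq_eq (z : ℂ) (hw : w ^ 2 = ‖w‖ ^ 2 * I) (h1 : 1 ≤ ‖w‖) :
    ‖fr z w‖ ≤ rexp (π * |z.im|) * ‖w‖ ^ (z.re - 1) * rexp (-π * ‖w‖ ^ 2) := by
  rw [fr, norm_div, norm_mul, norm_exp_pi_I_mul_sq_of_sq_eq hw]
  calc ‖w ^ (z - 1)‖ * rexp (-π * ‖w‖ ^ 2) / _
      ≤ ‖w ^ (z - 1)‖ * rexp (-π * ‖w‖ ^ 2) :=
        div_le_self (by positivity) (one_le_norm_exp_pi_I_mul_sub_exp_neg_of_sq_eq hw h1)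
    _ ≤ ‖w‖ ^ (z.re - 1) * rexp (π * |z.im|) * rexp (-π * ‖w‖ ^ 2) := by
        gcongr
        simpa using norm_cpow_le_rpow_mul_exp w (z - 1)
    _ = _ := by ring

lemma continuousAt_fr_of_sq_eq (z : ℂ) (hw : w ^ 2 = ‖w‖ ^ 2 * I) (h1 : 1 ≤ ‖w‖) :
    ContinuousAt (fr z) w := by
  have hslit : w ∈ slitPlane := by
    refine mem_slitPlane_iff.2 (Or.inr fun him => ?_)
    have := two_mul_im_sq_of_sq_eq hw
    rw [him] at this
    nlinarith
  have hden := one_le_norm_exp_pi_I_mul_sub_exp_neg_of_sq_eq hw h1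
  refine ((continuousAt_id.cpow continuousAt_const hslit).mul (by fun_prop)).div (by fun_prop) ?_
  intro h
  rw [h, norm_zero] at hden
  linarith

end Diagonal

lemma exp_mul_I_sq_eq_I {θ : ℝ} (hθ : θ = π / 4 ∨ θ = -(3 * π / 4)) : cexp (θ * I) ^ 2 = I := by
  rw [← Complex.exp_nat_mul]
  rcases hθ with rfl | rfl
  · rw [show ((2 : ℕ) : ℂ) * (↑(π / 4) * I) = π / 2 * I by push_cast; ring, exp_pi_div_two_mul_I]
  · rw [show ((2 : ℕ) : ℂ) * (↑(-(3 * π / 4)) * I) = π / 2 * I + ((-1 : ℤ) : ℂ) * (2 * π * I) by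
        push_cast; ring,
      Complex.exp_add, exp_int_mul_two_pi_mul_I, mul_one, exp_pi_div_two_mul_I]

lemma norm_ofReal_mul_exp_mul_I {t : ℝ} (ht : 0 ≤ t) (θ : ℝ) : ‖t * cexp (θ * I)‖ = t := by
  rw [norm_mul, norm_exp_ofReal_mul_I, norm_real, Real.norm_of_nonneg ht, mul_one]

lemma sq_eq_norm_sq_mul_I_of_ray {θ : ℝ} (hθ : θ = π / 4 ∨ θ = -(3 * π / 4)) {t : ℝ}
    (ht : 0 ≤ t) : (t * cexp (θ * I)) ^ 2 = ‖t * cexp (θ * I)‖ ^ 2 * I := by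
  rw [norm_ofReal_mul_exp_mul_I ht, mul_pow, exp_mul_I_sq_eq_I hθ]

lemma integrableOn_and_norm_setIntegral_le_of_norm_le_gaussian {E : Type*}
    [NormedAddCommGroup E] [NormedSpace ℝ E] {f : ℝ → E} {s : Set ℝ} {b c : ℝ} (hb : 0 < b)
    (hc : 0 ≤ c) (hf : AEStronglyMeasurable f (volume.restrict s))
    (hbound : ∀ᵐ t ∂(volume.restrict s), ‖f t‖ ≤ c * rexp (-b * t ^ 2)) :
    IntegrableOn f s ∧ ‖∫ t in s, f t‖ ≤ c * √(π / b) := by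
  have hg : Integrable (fun t : ℝ => c * rexp (-b * t ^ 2)) :=
    (integrable_exp_neg_mul_sq hb).const_mul c
  refine ⟨hg.integrableOn.mono' hf hbound, ?_⟩
  calc ‖∫ t in s, f t‖ ≤ ∫ t in s, c * rexp (-b * t ^ 2) :=
        norm_integral_le_of_norm_le hg.integrableOn hbound
    _ ≤ ∫ t, c * rexp (-b * t ^ 2) := setIntegral_le_integral hg (.of_forall fun t => by positivity)
    _ = c * √(π / b) := by rw [integral_const_mul, integral_gaussian]

theorem fr_tail_integral_bound_general (z : ℂ) (h1 : z.re < 1)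
    (θ : ℝ) (hθ : θ = Real.pi / 4 ∨ θ = -(3 * Real.pi / 4)) :
    ∃ R > (0 : ℝ), ∃ C > (0 : ℝ), ∀ r : ℝ, R ≤ r →
      IntegrableOn (fun t : ℝ => fr z (t * Complex.exp (θ * Complex.I))) (Set.Ici r) ∧
      ‖∫ t in Set.Ici r, fr z (t * Complex.exp (θ * Complex.I))‖ ≤ C * r ^ (z.re - 1) := by
  refine ⟨1, one_pos, rexp (π * |z.im|), exp_pos _, fun r hr => ?_⟩
  have hray : ∀ t ∈ Set.Ici r, (t * cexp (θ * I)) ^ 2 = ‖t * cexp (θ * I)‖ ^ 2 * I ∧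
      ‖t * cexp (θ * I)‖ = t ∧ 1 ≤ t := fun t ht =>
    have ht0 : 0 ≤ t := zero_le_one.trans (hr.trans ht)
    ⟨sq_eq_norm_sq_mul_I_of_ray hθ ht0, norm_ofReal_mul_exp_mul_I ht0 θ, hr.trans ht⟩
  have hcont : ContinuousOn (fun t : ℝ => fr z (t * cexp (θ * I))) (Set.Ici r) := by
    intro t ht
    obtain ⟨hsq, hnorm, ht1⟩ := hray t ht
    exact ((continuousAt_fr_of_sq_eq z hsq (hnorm.symm ▸ ht1)).comp
      (f := fun s : ℝ => (s : ℂ) * cexp (θ * I))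
      (continuous_ofReal.mul continuous_const).continuousAt).continuousWithinAt
  have hbound : ∀ᵐ (t : ℝ) ∂(volume.restrict (Set.Ici r)),
      ‖fr z (t * cexp (θ * I))‖ ≤ rexp (π * |z.im|) * r ^ (z.re - 1) * rexp (-π * t ^ 2) := by
    filter_upwards [ae_restrict_mem measurableSet_Ici] with t ht
    obtain ⟨hsq, hnorm, ht1⟩ := hray t ht
    calc _ ≤ _ := norm_fr_le_of_sq_eq z hsq (hnorm.symm ▸ ht1)
      _ ≤ _ := by
        rw [hnorm]
        gcongr rexp _ * ?_ * rexp _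
        exact rpow_le_rpow_of_nonpos (by linarith) ht (by linarith)
  simpa [pi_pos.ne'] using integrableOn_and_norm_setIntegral_le_of_norm_le_gaussian pi_pos
    (by positivity) (hcont.aestronglyMeasurable measurableSet_Ici) hbound

/-- Finiteness of the far parts of the right contour (paper's Lemma 2.2): along the
rays at angles `π/4` and `-3π/4`, the tail integrals of `f_r` exist and are bounded
by `C·r^(Re z - 1)`. -/
theorem fr_tail_integral_bound (z : ℂ) (h0 : 0 < z.re) (h1 : z.re < 1)
    (θ : ℝ) (hθ : θ = Real.pi / 4 ∨ θ = -(3 * Real.pi / 4)) :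
    ∃ R > (0 : ℝ), ∃ C > (0 : ℝ), ∀ r : ℝ, R ≤ r →
      IntegrableOn (fun t : ℝ => fr z (t * Complex.exp (θ * Complex.I))) (Set.Ici r) ∧
      ‖∫ t in Set.Ici r, fr z (t * Complex.exp (θ * Complex.I))‖ ≤ C * r ^ (z.re - 1) :=
  fr_tail_integral_bound_general z h1 θ hθ
end
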